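/- (Identity underlying Theorem 1 of the paper.) Let S be a nonempty finite indexed family of points in a real inner product space H, partitioned into two disjoint nonempty subfamilies T and V. Then the squared distance between the two cluster centroids satisfies ‖μ_T − μ_V‖² = ((|T| + |V|)/(|T|·|V|)) · (SSQ(S) − SSQ(T) − SSQ(V)). -/

import Mathlib

/-!
Applying the parallel axis formula `∑ ‖x - c‖² = SSQ + n ‖μ - c‖²` to `T` and to `V` with
`c = μ_S` splits `SSQ(S)` as `SSQ(T) + SSQ(V) + |T| ‖μ_T - μ_S‖² + |V| ‖μ_V - μ_S‖²`. Since `μ_S` is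
the weighted mean of `μ_T` and `μ_V`, both deviations are multiples of `μ_T - μ_V`, and the two
extra terms add up to `|T| |V| / (|T| + |V|) · ‖μ_T - μ_V‖²`.
-/

open Finset

variable {ι H : Type*} [DecidableEq ι] [NormedAddCommGroup H] [InnerProductSpace ℝ H]

/-- The centroid of the finite indexed family of points `f i`, `i ∈ A`. -/
noncomputable def centroid (f : ι → H) (A : Finset ι) : H :=
  (A.card : ℝ)⁻¹ • ∑ i ∈ A, f i

/-- The sum of squared deviations of the family `f i`, `i ∈ A` from its centroid. -/
noncomputable def SSQ (f : ι → H) (A : Finset ι) : ℝ :=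
  ∑ i ∈ A, ‖f i - centroid f A‖ ^ 2

omit [DecidableEq ι] in
theorem card_smul_centroid (f : ι → H) (A : Finset ι) :
    (#A : ℝ) • centroid f A = ∑ i ∈ A, f i := by
  rcases A.eq_empty_or_nonempty with rfl | hA
  · simp
  · rw [_root_.centroid, smul_smul, mul_inv_cancel₀ (by positivity), one_smul]

omit [DecidableEq ι] in
theorem sum_sub_centroid (f : ι → H) (A : Finset ι) :
    ∑ i ∈ A, (f i - centroid f A) = 0 := by
  rw [sum_sub_distrib, sum_const, ← Nat.cast_smul_eq_nsmul ℝ, card_smul_centroid, sub_self]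

omit [DecidableEq ι] in
/-- König–Huygens (parallel axis) formula. -/
theorem sum_norm_sub_sq_eq_SSQ_add (f : ι → H) (A : Finset ι) (c : H) :
    ∑ i ∈ A, ‖f i - c‖ ^ 2 = SSQ f A + #A * ‖centroid f A - c‖ ^ 2 := by
  have h_cross : ∑ i ∈ A, 2 * inner ℝ (f i - centroid f A) (centroid f A - c) = 0 := by
    rw [← mul_sum, ← sum_inner, sum_sub_centroid, inner_zero_left, mul_zero]
  calc ∑ i ∈ A, ‖f i - c‖ ^ 2
      = ∑ i ∈ A, (‖f i - centroid f A‖ ^ 2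
          + 2 * inner ℝ (f i - centroid f A) (centroid f A - c)
          + ‖centroid f A - c‖ ^ 2) := by
        refine sum_congr rfl fun i _ => ?_
        rw [← norm_add_sq_real, sub_add_sub_cancel]
    _ = SSQ f A + #A * ‖centroid f A - c‖ ^ 2 := by
        rw [sum_add_distrib, sum_add_distrib, h_cross, add_zero, sum_const, nsmul_eq_mul, SSQ]

theorem centroid_union {f : ι → H} {T V : Finset ι} (hdisj : Disjoint T V) :
    centroid f (T ∪ V) =
      ((#T : ℝ) + #V)⁻¹ • ((#T : ℝ) • centroid f T + (#V : ℝ) • centroid f V) := by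
  rw [_root_.centroid, card_union_of_disjoint hdisj, sum_union hdisj, card_smul_centroid,
    card_smul_centroid, Nat.cast_add]

theorem mul_norm_sub_sq_add_mul_norm_sub_sq (t v : ℝ) (htv : t + v ≠ 0) (a b : H) :
    t * ‖a - (t + v)⁻¹ • (t • a + v • b)‖ ^ 2 + v * ‖b - (t + v)⁻¹ • (t • a + v • b)‖ ^ 2
      = t * v / (t + v) * ‖a - b‖ ^ 2 := by
  have ha : a - (t + v)⁻¹ • (t • a + v • b) = (v / (t + v)) • (a - b) := by
    match_scalars <;> grind
  have hb : b - (t + v)⁻¹ • (t • a + v • b) = (-(t / (t + v))) • (a - b) := by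
    match_scalars <;> grind
  rw [ha, hb, norm_smul, norm_smul, mul_pow, mul_pow, Real.norm_eq_abs, Real.norm_eq_abs,
    sq_abs, sq_abs]
  field_simp
  ring

theorem SSQ_union {f : ι → H} {T V : Finset ι} (hdisj : Disjoint T V) :
    SSQ f (T ∪ V) =
      SSQ f T + SSQ f V + #T * #V / (#T + #V) * ‖centroid f T - centroid f V‖ ^ 2 := by
  rcases (T ∪ V).eq_empty_or_nonempty with hTV | hTV
  · obtain ⟨rfl, rfl⟩ := union_eq_empty.mp hTV
    simp [SSQ]
  have hcard : ((#T : ℝ) + #V) ≠ 0 := by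
    rw [← Nat.cast_add, ← card_union_of_disjoint hdisj]; positivity
  rw [← mul_norm_sub_sq_add_mul_norm_sub_sq _ _ hcard, ← centroid_union hdisj, SSQ,
    sum_union hdisj, sum_norm_sub_sq_eq_SSQ_add, sum_norm_sub_sq_eq_SSQ_add]
  ring

/-- Identity underlying Theorem 1 of the paper:
`‖μ_T − μ_V‖² = ((|T| + |V|)/(|T|·|V|)) · (SSQ(S) − SSQ(T) − SSQ(V))`. -/
theorem sq_dist_centroids_eq_ssq_gap (f : ι → H) (S T V : Finset ι)
    (hdisj : Disjoint T V) (hunion : T ∪ V = S)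
    (hT : T.Nonempty) (hV : V.Nonempty) :
    ‖centroid f T - centroid f V‖ ^ 2 =
      (((T.card : ℝ) + (V.card : ℝ)) / ((T.card : ℝ) * (V.card : ℝ))) *
        (SSQ f S - SSQ f T - SSQ f V) := by
  have ht : (#T : ℝ) ≠ 0 := by positivity
  have hv : (#V : ℝ) ≠ 0 := by positivity
  rw [← hunion, SSQ_union hdisj]
  field_simp
  ring
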